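/- arXiv:0802.1945 — 3 statements merged into one kernel-verified Lean document; each statement's English description precedes it below -/
import Mathlib

section
/- Let K be a field, q ∈ K not a root of unity or q = 1, h ∈ K with (q,h) ≠ (1,0), and c ∈ K. Define (T-c)_{q,h}^{[0]} = 1 and (T-c)_{q,h}^{[n]} = (T-c)(T-σ(c))⋯(T-σ^{n-1}(c)) where σ(x) = qx + h. Define the twisted derivative d_{q,h}(f)(T) = (f(qT+h) - f(T)) / ((q-1)T + h) on polynomials. Then d_{q,h}((T-c)_{q,h}^{[n]}) = [n]_q · (T-c)_{q,h}^{[n-1]} for all n ≥ 1. -/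
/-!
Since `σ(T) - σ^(k+1)(c) = q (T - σ^k(c))`, substituting `σ(T) = qT + h` into the twisted power
of degree `n + 1` gives `q^n (σ(T) - c)` times the twisted power of degree `n`. The difference
with `(T - σ^n(c))` times that same power is then `[n+1]_q ((q-1)T + h)` times it, by the
closed form `σ^n(c) = q^n c + [n]_q h` and `[n+1]_q (q - 1) = q^(n+1) - 1`.
-/

open Polynomial Finset

section AffineIterate

variable {R : Type*} [CommRing R] (q h : R)

theorem affine_iterate_apply (c : R) (k : ℕ) :
    (fun x : R => q * x + h)^[k] c = q ^ k * c + (∑ i ∈ range k, q ^ i) * h := by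
  induction k with
  | zero => simp
  | succ k ih =>
    rw [Function.iterate_succ_apply', ih, geom_sum_succ]
    ring

theorem X_sub_C_affine_comp (a : R) :
    (X - C (q * a + h)).comp (C q * X + C h) = C q * (X - C a) := by
  rw [sub_comp, X_comp, C_comp, map_add, map_mul]
  ring

theorem prod_X_sub_C_affine_iterate_comp (c : R) (n : ℕ) :
    (∏ k ∈ range (n + 1), (X - C ((fun x : R => q * x + h)^[k] c))).comp (C q * X + C h)
      = (C q * X + C h - C c) * C q ^ n
        * ∏ k ∈ range n, (X - C ((fun x : R => q * x + h)^[k] c)) := by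
  rw [Polynomial.prod_comp, prod_range_succ']
  simp only [Function.iterate_succ_apply', X_sub_C_affine_comp, prod_mul_distrib, prod_const,
    card_range]
  rw [Function.iterate_zero_apply, sub_comp, X_comp, C_comp]
  ring

theorem affine_comp_sub_eq_geom_sum_mul (c : R) (n : ℕ) :
    (C q * X + C h - C c) * C q ^ n - (X - C ((fun x : R => q * x + h)^[n] c))
      = C (∑ i ∈ range (n + 1), q ^ i) * (C (q - 1) * X + C h) := by
  have hgeom := congrArg C (geom_sum_mul q (n + 1))
  rw [affine_iterate_apply, sum_range_succ] at *
  simp only [map_add, map_mul, map_sub, map_pow, map_sum, map_one] at *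
  linear_combination (-X) * hgeom

end AffineIterate

theorem stmt4_general {K : Type*} [Field K] (q h c : K) (n : ℕ) :
    (∏ k ∈ Finset.range n, (X - C ((fun x : K => q * x + h)^[k] c))).comp (C q * X + C h)
        - ∏ k ∈ Finset.range n, (X - C ((fun x : K => q * x + h)^[k] c))
      = C (∑ i ∈ Finset.range n, q ^ i) * ((C (q - 1) * X + C h)
        * ∏ k ∈ Finset.range (n - 1), (X - C ((fun x : K => q * x + h)^[k] c))) := by
  cases n with
  | zero => simp
  | succ m =>
    rw [prod_X_sub_C_affine_iterate_comp, prod_range_succ, Nat.add_sub_cancel]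
    linear_combination (∏ k ∈ range m, (X - C ((fun x : K => q * x + h)^[k] c)))
      * affine_comp_sub_eq_geom_sum_mul q h c m

/-- Twisted derivative of the twisted powers: with `σ(x) = qx + h`,
`(T-c)_{q,h}^{[n]} = ∏_{k<n} (T - σ^k(c))` and
`d_{q,h}(f)(T) = (f(qT+h) - f(T)) / ((q-1)T + h)`, one has
`d_{q,h}((T-c)_{q,h}^{[n]}) = [n]_q · (T-c)_{q,h}^{[n-1]}` for `n ≥ 1`
(stated after clearing the denominator `(q-1)T + h`). -/
theorem stmt4 {K : Type*} [Field K] [CharZero K] (q h c : K) (hq0 : q ≠ 0)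
    (hq : q ≠ 1 → ∀ n : ℕ, 0 < n → q ^ n ≠ 1) (hqh : (q, h) ≠ (1, 0)) (n : ℕ) (hn : 1 ≤ n) :
    (∏ k ∈ Finset.range n, (X - C ((fun x : K => q * x + h)^[k] c))).comp (C q * X + C h)
        - ∏ k ∈ Finset.range n, (X - C ((fun x : K => q * x + h)^[k] c))
      = C (∑ i ∈ Finset.range n, q ^ i) * ((C (q - 1) * X + C h)
        * ∏ k ∈ Finset.range (n - 1), (X - C ((fun x : K => q * x + h)^[k] c))) :=
  stmt4_general q h c n
end

section
/- Let K be a complete non-archimedean field, q, h ∈ K with |q-1| < 1, and let c ∈ K and ρ > 0 satisfy |(q-1)c + h| < ρ. If f(T) = ∑_{n≥0} a_n (T-c)^n converges on the open disc of radius R > ρ around c and is also written f(T) = ∑_{n≥0} ã_n (T-c)_{q,h}^{[n]} in the twisted basis, then sup_n |a_n| ρ^n = sup_n |ã_n| ρ^n. -/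
/-!
Both expansions are Newton series `∑ cₙ ∏_{k<n} (T - dₖ)` about `c`: the monomials have all nodes
equal to `c`, the twisted powers have nodes `σᵏ(c)`, and since `σ` is 1-Lipschitz (`|q| ≤ 1`),
the ultrametric inequality gives `|σᵏ(c) - c| ≤ |σ(c) - c| = |(q-1)c + h| < ρ`. For two node
sequences in the closed disc of radius `δ < ρ` the change-of-basis coefficients satisfy
`|C_{j,n}| r^n ≤ r^j` for every `r ≥ δ`, so re-expanding `∑ aⱼ (T-c)^j` in the twisted basis
(a Fubini argument on `|T - c| < ρ`) produces coefficients `Bₙ` with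
`sup |Bₙ| ρⁿ ≤ sup |aⱼ| ρʲ`, and symmetrically. Uniqueness of Newton expansions on the disc
identifies `B` with `b`: evaluate at the nodes one by one, and when the orbit of `c` is periodic
(finitely many nodes, so a node can repeat) approach the node instead. Hence both sups have the
same upper bounds.
-/
open Finset Function

lemma exists_pos_le_dist_of_finite {X : Type*} [MetricSpace X] {T : Set X} (hT : T.Finite)
    (a : X) : ∃ μ > 0, ∀ t ∈ T, t ≠ a → μ ≤ dist t a := by
  obtain ⟨μ, hμ, hball⟩ :=
    Metric.isOpen_iff.mp (hT.sdiff (t := {a})).isClosed.isOpen_compl a (by simp)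
  exact ⟨μ, hμ, fun t ht hta => not_lt.mp fun hlt => hball (Metric.mem_ball.mpr hlt) ⟨ht, hta⟩⟩

section Algebra

variable {R : Type*} [CommRing R]

/-- `(T - c)_{q,h}^{[n]}` is `newtonBasis (fun k => σ^[k] c) T n`, and `(T - c)^n` is
`newtonBasis (fun _ => c) T n`. -/
def newtonBasis (d : ℕ → R) (x : R) (n : ℕ) : R := ∏ k ∈ range n, (x - d k)

lemma newtonBasis_succ (d : ℕ → R) (x : R) (n : ℕ) :
    newtonBasis d x (n + 1) = newtonBasis d x n * (x - d n) :=
  prod_range_succ _ n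

lemma newtonBasis_add (d : ℕ → R) (x : R) (m n : ℕ) :
    newtonBasis d x (m + n) = newtonBasis d x m * newtonBasis (fun k => d (m + k)) x n :=
  prod_range_add _ m n

lemma newtonBasis_const (c x : R) (n : ℕ) : newtonBasis (fun _ => c) x n = (x - c) ^ n := by
  simp [newtonBasis]

def newtonChangeCoeff (e d : ℕ → R) : ℕ → ℕ → R
  | 0, 0 => 1
  | 0, _ + 1 => 0
  | j + 1, 0 => (d 0 - e j) * newtonChangeCoeff e d j 0
  | j + 1, n + 1 => newtonChangeCoeff e d j n + (d (n + 1) - e j) * newtonChangeCoeff e d j (n + 1)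

lemma newtonChangeCoeff_eq_zero_of_lt (e d : ℕ → R) {j n : ℕ} (h : j < n) :
    newtonChangeCoeff e d j n = 0 := by
  induction j generalizing n with
  | zero => obtain ⟨n, rfl⟩ := Nat.exists_eq_add_of_lt h; rfl
  | succ j ih =>
    obtain ⟨n, rfl⟩ : ∃ m, n = m + 1 := Nat.exists_eq_succ_of_ne_zero (by omega)
    simp only [newtonChangeCoeff, ih (by omega : j < n), ih (by omega : j < n + 1), mul_zero,
      add_zero]

lemma newtonBasis_eq_sum_newtonChangeCoeff (e d : ℕ → R) (x : R) (j : ℕ) :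
    newtonBasis e x j = ∑ n ∈ range (j + 1), newtonChangeCoeff e d j n * newtonBasis d x n := by
  induction j with
  | zero => simp [newtonChangeCoeff, newtonBasis]
  | succ j ih =>
    rw [newtonBasis_succ, ih, sum_mul]
    calc ∑ n ∈ range (j + 1), newtonChangeCoeff e d j n * newtonBasis d x n * (x - e j)
        = ∑ n ∈ range (j + 1), newtonChangeCoeff e d j n * newtonBasis d x (n + 1)
          + ∑ n ∈ range (j + 2), (d n - e j) * newtonChangeCoeff e d j n * newtonBasis d x n := by
          rw [sum_range_succ _ (j + 1), newtonChangeCoeff_eq_zero_of_lt e d (Nat.lt_succ_self j),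
            mul_zero, zero_mul, add_zero, ← sum_add_distrib]
          simp only [newtonBasis_succ]
          exact sum_congr rfl fun n _ => by ring
      _ = ∑ n ∈ range (j + 2), newtonChangeCoeff e d (j + 1) n * newtonBasis d x n := by
          rw [sum_range_succ' _ (j + 1), sum_range_succ' _ (j + 1)]
          simp only [newtonChangeCoeff, add_mul, sum_add_distrib]
          ring

end Algebra

section Ultrametric

variable {K : Type*} [NormedField K] [IsUltrametricDist K]

lemma norm_sub_le_max_norm_sub (x y c : K) : ‖x - y‖ ≤ max ‖x - c‖ ‖y - c‖ := by
  simpa only [dist_eq_norm, norm_sub_rev c y] using IsUltrametricDist.dist_triangle_max x c y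

lemma norm_newtonBasis_le {d : ℕ → K} {c : K} {δ : ℝ} (hd : ∀ k, ‖d k - c‖ ≤ δ) (x : K) (n : ℕ) :
    ‖newtonBasis d x n‖ ≤ max ‖x - c‖ δ ^ n := by
  rw [newtonBasis, norm_prod]
  calc ∏ k ∈ range n, ‖x - d k‖ ≤ ∏ _k ∈ range n, max ‖x - c‖ δ :=
        prod_le_prod (fun _ _ => norm_nonneg _) fun k _ =>
          (norm_sub_le_max_norm_sub x (d k) c).trans (max_le_max le_rfl (hd k))
    _ = max ‖x - c‖ δ ^ n := by simp

/-- Changing Newton bases does not increase the Gauss norm at a radius `r` that bounds all the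
node differences. -/
lemma norm_newtonChangeCoeff_mul_pow_le {e d : ℕ → K} {r : ℝ} (h : ∀ n j, ‖d n - e j‖ ≤ r)
    (j n : ℕ) : ‖newtonChangeCoeff e d j n‖ * r ^ n ≤ r ^ j := by
  have hr : 0 ≤ r := (norm_nonneg _).trans (h 0 0)
  induction j generalizing n with
  | zero => cases n <;> simp [newtonChangeCoeff]
  | succ j ih =>
    cases n with
    | zero =>
      simpa [newtonChangeCoeff, pow_succ'] using
        mul_le_mul (h 0 j) (by simpa using ih 0) (by positivity) hr
    | succ n =>
      have h₁ : ‖newtonChangeCoeff e d j n‖ * r ^ (n + 1) ≤ r ^ (j + 1) := by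
        rw [pow_succ, pow_succ, ← mul_assoc]
        exact mul_le_mul_of_nonneg_right (ih n) hr
      have h₂ : ‖(d (n + 1) - e j) * newtonChangeCoeff e d j (n + 1)‖ * r ^ (n + 1)
          ≤ r ^ (j + 1) := by
        rw [norm_mul, mul_assoc, pow_succ' r j]
        exact mul_le_mul (h _ _) (ih _) (by positivity) hr
      calc ‖newtonChangeCoeff e d (j + 1) (n + 1)‖ * r ^ (n + 1)
          ≤ max ‖newtonChangeCoeff e d j n‖ ‖(d (n + 1) - e j) * newtonChangeCoeff e d j (n + 1)‖
            * r ^ (n + 1) := by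
            gcongr
            exact IsUltrametricDist.norm_add_le_max _ _
        _ ≤ r ^ (j + 1) := by
            rw [max_mul_of_nonneg _ _ (by positivity)]
            exact max_le h₁ h₂

lemma norm_newtonChangeCoeff_mul_pow_le_of_norm_sub_le {e d : ℕ → K} {c : K} {δ r : ℝ}
    (hd : ∀ k, ‖d k - c‖ ≤ δ) (he : ∀ k, ‖e k - c‖ ≤ δ) (hr : δ ≤ r) (j n : ℕ) :
    ‖newtonChangeCoeff e d j n‖ * r ^ n ≤ r ^ j :=
  norm_newtonChangeCoeff_mul_pow_le (fun n j =>
    ((norm_sub_le_max_norm_sub _ _ c).trans (max_le (hd n) (he j))).trans hr) j n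

lemma norm_sub_le_norm_sub_of_le {a b x y : K} (hxy : ‖x - a‖ ≤ ‖y - a‖)
    (hb : b = a ∨ ‖y - a‖ < ‖b - a‖) : ‖x - b‖ ≤ ‖y - b‖ := by
  rcases hb with rfl | hb
  · exact hxy
  calc ‖x - b‖ ≤ max ‖x - a‖ ‖b - a‖ := norm_sub_le_max_norm_sub x b a
    _ = max ‖y - a‖ ‖a - b‖ := by
      rw [norm_sub_rev a, max_eq_right (hxy.trans hb.le), max_eq_right hb.le]
    _ = ‖y - b‖ := by
      rw [← IsUltrametricDist.norm_add_eq_max_of_norm_ne_norm (by rw [norm_sub_rev a]; exact hb.ne),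
        sub_add_sub_cancel]

lemma norm_newtonBasis_le_norm_newtonBasis {d : ℕ → K} {a x y : K} (hxy : ‖x - a‖ ≤ ‖y - a‖)
    (hd : ∀ k, d k = a ∨ ‖y - a‖ < ‖d k - a‖) (n : ℕ) :
    ‖newtonBasis d x n‖ ≤ ‖newtonBasis d y n‖ := by
  rw [newtonBasis, newtonBasis, norm_prod, norm_prod]
  exact prod_le_prod (fun _ _ => norm_nonneg _) fun k _ => norm_sub_le_norm_sub_of_le hxy (hd k)

end Ultrametric

section Series

variable {K : Type*} [NormedField K] {γ d : ℕ → K} {x : K}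

lemma tsum_newtonBasis_eq_sum_add (hs : Summable fun n => γ n * newtonBasis d x n) (m : ℕ) :
    ∑' n, γ n * newtonBasis d x n = ∑ n ∈ range m, γ n * newtonBasis d x n
      + newtonBasis d x m * ∑' n, γ (m + n) * newtonBasis (fun k => d (m + k)) x n := by
  rw [← hs.sum_add_tsum_nat_add m, ← tsum_mul_left]
  congr 1
  exact tsum_congr fun n => by rw [add_comm n m, newtonBasis_add]; ring

lemma tsum_newtonBasis_eq_add_mul (hs : Summable fun n => γ n * newtonBasis d x n) :
    ∑' n, γ n * newtonBasis d x n
      = γ 0 + (x - d 0) * ∑' n, γ (1 + n) * newtonBasis (fun k => d (1 + k)) x n := by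
  simpa [newtonBasis] using tsum_newtonBasis_eq_sum_add hs 1

lemma Summable.newtonBasis_shift (hs : Summable fun n => γ n * newtonBasis d x n) {m : ℕ}
    (hx : newtonBasis d x m ≠ 0) :
    Summable fun n => γ (m + n) * newtonBasis (fun k => d (m + k)) x n := by
  refine (summable_mul_left_iff hx).mp (((summable_nat_add_iff m).mpr hs).congr fun n => ?_)
  rw [add_comm n m, newtonBasis_add]
  ring

end Series

section Uniqueness

variable {K : Type*} [NontriviallyNormedField K]

lemma NormedField.le_zero_of_forall_le_norm_mul {v C η : ℝ} (hη : 0 < η)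
    (h : ∀ ε : K, 0 < ‖ε‖ → ‖ε‖ ≤ η → v ≤ ‖ε‖ * C) : v ≤ 0 := by
  by_contra! hv
  obtain ⟨ε, hε, hεlt⟩ :=
    NormedField.exists_norm_lt K (lt_min hη (div_pos hv (by positivity : 0 < |C| + 1)))
  have hsmall : ‖ε‖ * (|C| + 1) < v :=
    (lt_div_iff₀ (by positivity)).mp (hεlt.trans_le (min_le_right _ _))
  nlinarith [h ε hε (hεlt.trans_le (min_le_left _ _)).le, le_abs_self C, norm_nonneg ε]

variable [IsUltrametricDist K]

/-- Near `d 0` but off the finitely many nodes, the tail after the first term is dominated termwise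
by the tail at a fixed point, so `γ 0 = -(x - d 0) * tail(x)` is as small as we like. -/
theorem coeff_zero_eq_zero_of_finite_range {γ d : ℕ → K} {S : Set K} {r : ℝ}
    (hd : (Set.range d).Finite) (hS : S.Finite) (hr : 0 < r)
    (h : ∀ x, ‖x - d 0‖ < r → x ∉ S →
      Summable (fun n => γ n * newtonBasis d x n) ∧ ∑' n, γ n * newtonBasis d x n = 0) :
    γ 0 = 0 := by
  obtain ⟨μ, hμ, hsep⟩ := exists_pos_le_dist_of_finite (hS.union hd) (d 0)
  set d' : ℕ → K := fun k => d (1 + k)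
  have hnear : ∀ x, 0 < ‖x - d 0‖ → ‖x - d 0‖ < min μ r →
      Summable (fun n => γ (1 + n) * newtonBasis d' x n) ∧
        γ 0 = -((x - d 0) * ∑' n, γ (1 + n) * newtonBasis d' x n) := by
    intro x hx₀ hx
    have hxS : x ∉ S := fun hxS => (hsep x (Or.inl hxS) (by rintro rfl; simp at hx₀)).not_gt
      (by rw [dist_eq_norm]; exact hx.trans_le (min_le_left _ _))
    obtain ⟨hs, h₀⟩ := h x (hx.trans_le (min_le_right _ _)) hxS
    refine ⟨hs.newtonBasis_shift (m := 1) (by simpa [newtonBasis] using hx₀), ?_⟩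
    rw [tsum_newtonBasis_eq_add_mul hs] at h₀
    linear_combination h₀
  obtain ⟨ε₀, hε₀, hε₀μ⟩ := NormedField.exists_norm_lt K (lt_min hμ hr)
  obtain ⟨C, hC⟩ := (hnear (d 0 + ε₀) (by simpa using hε₀) (by simpa using hε₀μ)).1
    |>.tendsto_atTop_zero.norm.bddAbove_range
  have hC₀ : 0 ≤ C := (norm_nonneg _).trans (hC ⟨0, rfl⟩)
  have hbound : ∀ ε : K, 0 < ‖ε‖ → ‖ε‖ ≤ ‖ε₀‖ → ‖γ 0‖ ≤ ‖ε‖ * C := by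
    intro ε hε hεε₀
    rw [(hnear (d 0 + ε) (by simpa using hε) (by simpa using hεε₀.trans_lt hε₀μ)).2, norm_neg,
      norm_mul, add_sub_cancel_left]
    gcongr
    refine IsUltrametricDist.norm_tsum_le_of_forall_le_of_nonneg hC₀ fun n => ?_
    refine le_trans ?_ (hC ⟨n, rfl⟩)
    simp only [norm_mul]
    gcongr
    refine norm_newtonBasis_le_norm_newtonBasis (a := d 0) (by simpa using hεε₀) (fun k => ?_) n
    by_cases hk : d (1 + k) = d 0
    · exact Or.inl hk
    · rw [add_sub_cancel_left]
      refine Or.inr ((lt_min_iff.mp hε₀μ).1.trans_le ?_)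
      simpa [dist_eq_norm] using hsep _ (Or.inr ⟨1 + k, rfl⟩) hk
  exact norm_le_zero_iff.mp (NormedField.le_zero_of_forall_le_norm_mul hε₀ hbound)

theorem eq_zero_of_tsum_newtonBasis_eq_zero {γ d : ℕ → K} {c : K} {δ ρ : ℝ} (hδρ : δ < ρ)
    (hd : ∀ k, ‖d k - c‖ ≤ δ) (hdich : Injective d ∨ (Set.range d).Finite)
    (h : ∀ x, ‖x - c‖ < ρ →
      Summable (fun n => γ n * newtonBasis d x n) ∧ ∑' n, γ n * newtonBasis d x n = 0)
    (m : ℕ) : γ m = 0 := by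
  induction m using Nat.strong_induction_on with
  | _ m ih =>
  -- Dividing by `newtonBasis d x m` leaves a Newton series with nodes `d (m + ·)` and constant
  -- term `γ m`, which is its value at the node `d m` (or its limit there, if `d m` repeats).
  have hshift : ∀ x, ‖x - c‖ < ρ → x ∉ d '' Set.Iio m →
      Summable (fun n => γ (m + n) * newtonBasis (fun k => d (m + k)) x n) ∧
        ∑' n, γ (m + n) * newtonBasis (fun k => d (m + k)) x n = 0 := by
    intro x hx hxS
    obtain ⟨hs, h₀⟩ := h x hx
    have hP : newtonBasis d x m ≠ 0 := prod_ne_zero_iff.mpr fun k hk =>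
      sub_ne_zero.mpr fun hxk => hxS ⟨k, mem_range.mp hk, hxk.symm⟩
    refine ⟨hs.newtonBasis_shift hP, ?_⟩
    rw [tsum_newtonBasis_eq_sum_add hs m,
      sum_eq_zero fun k hk => by rw [ih k (mem_range.mp hk), zero_mul], zero_add] at h₀
    exact (mul_eq_zero.mp h₀).resolve_left hP
  have hdm : ‖d m - c‖ < ρ := (hd m).trans_lt hδρ
  rcases hdich with hinj | hfin
  · obtain ⟨hs, h₀⟩ := hshift (d m) hdm fun ⟨k, hk, hkm⟩ => (Set.mem_Iio.mp hk).ne (hinj hkm)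
    simpa [tsum_newtonBasis_eq_add_mul hs] using h₀
  · exact coeff_zero_eq_zero_of_finite_range (γ := fun n => γ (m + n)) (d := fun k => d (m + k))
      (hfin.subset (Set.range_subset_iff.mpr fun k => ⟨m + k, rfl⟩)) ((Set.finite_Iio m).image d)
      ((norm_nonneg _).trans_lt hdm) fun x hx => hshift x <|
        (norm_sub_le_max_norm_sub x c (d m)).trans_lt (max_lt hx (by rwa [norm_sub_rev]))

end Uniqueness

section Reexpansion

variable {K : Type*} [NormedField K] [IsUltrametricDist K]
  {e d : ℕ → K} {c : K} {δ ρ M : ℝ} {a : ℕ → K}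

lemma norm_tsum_mul_newtonChangeCoeff_mul_pow_le (hδρ : δ < ρ) (hd : ∀ k, ‖d k - c‖ ≤ δ)
    (he : ∀ k, ‖e k - c‖ ≤ δ) (ha : ∀ j, ‖a j‖ * ρ ^ j ≤ M) (n : ℕ) :
    ‖∑' j, a j * newtonChangeCoeff e d j n‖ * ρ ^ n ≤ M := by
  have hρ : 0 < ρ := ((norm_nonneg _).trans (hd 0)).trans_lt hδρ
  have hM : 0 ≤ M := (by positivity : 0 ≤ ‖a 0‖ * ρ ^ 0).trans (ha 0)
  rw [← le_div_iff₀ (by positivity)]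
  refine IsUltrametricDist.norm_tsum_le_of_forall_le_of_nonneg (by positivity) fun j => ?_
  rw [le_div_iff₀ (by positivity), norm_mul, mul_assoc]
  calc ‖a j‖ * (‖newtonChangeCoeff e d j n‖ * ρ ^ n) ≤ ‖a j‖ * ρ ^ j := by
        gcongr
        exact norm_newtonChangeCoeff_mul_pow_le_of_norm_sub_le hd he hδρ.le j n
    _ ≤ M := ha j

lemma norm_mul_newtonChangeCoeff_mul_newtonBasis_le (hρ : 0 < ρ) (hd : ∀ k, ‖d k - c‖ ≤ δ)
    (he : ∀ k, ‖e k - c‖ ≤ δ) (ha : ∀ j, ‖a j‖ * ρ ^ j ≤ M) {x : K} {s : ℝ}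
    (hs : max ‖x - c‖ δ < s) (j n : ℕ) :
    ‖a j * newtonChangeCoeff e d j n * newtonBasis d x n‖
      ≤ M * (s / ρ) ^ j * (max ‖x - c‖ δ / s) ^ n := by
  have hs₀ : 0 < s := ((norm_nonneg _).trans (le_max_left _ _)).trans_lt hs
  have hM : 0 ≤ M := (by positivity : 0 ≤ ‖a 0‖ * ρ ^ 0).trans (ha 0)
  rw [div_pow, div_pow, show M * (s ^ j / ρ ^ j) * (max ‖x - c‖ δ ^ n / s ^ n)
      = M * s ^ j * max ‖x - c‖ δ ^ n / (ρ ^ j * s ^ n) by field_simp,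
    le_div_iff₀ (by positivity), norm_mul, norm_mul]
  calc ‖a j‖ * ‖newtonChangeCoeff e d j n‖ * ‖newtonBasis d x n‖ * (ρ ^ j * s ^ n)
      = (‖a j‖ * ρ ^ j) * (‖newtonChangeCoeff e d j n‖ * s ^ n) * ‖newtonBasis d x n‖ := by ring
    _ ≤ M * s ^ j * max ‖x - c‖ δ ^ n :=
      mul_le_mul (mul_le_mul (ha j) (norm_newtonChangeCoeff_mul_pow_le_of_norm_sub_le hd he
          ((le_max_right _ _).trans hs.le) j n) (by positivity) hM)
        (norm_newtonBasis_le hd x n) (norm_nonneg _) (mul_nonneg hM (by positivity))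

theorem hasSum_tsum_mul_newtonChangeCoeff_mul_newtonBasis [CompleteSpace K] (hδρ : δ < ρ)
    (hd : ∀ k, ‖d k - c‖ ≤ δ) (he : ∀ k, ‖e k - c‖ ≤ δ) (ha : ∀ j, ‖a j‖ * ρ ^ j ≤ M)
    {x : K} (hx : ‖x - c‖ < ρ) :
    HasSum (fun n => (∑' j, a j * newtonChangeCoeff e d j n) * newtonBasis d x n)
      (∑' j, a j * newtonBasis e x j) := by
  have hρ : 0 < ρ := ((norm_nonneg _).trans (hd 0)).trans_lt hδρ
  obtain ⟨s, hrs, hsρ⟩ := exists_between (max_lt hx hδρ)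
  have hs : 0 < s := ((norm_nonneg _).trans (le_max_left _ _)).trans_lt hrs
  have hM : 0 ≤ M := (by positivity : 0 ≤ ‖a 0‖ * ρ ^ 0).trans (ha 0)
  set F : ℕ × ℕ → K := fun p => a p.1 * newtonChangeCoeff e d p.1 p.2 * newtonBasis d x p.2
  have hFs : Summable F := by
    refine .of_norm_bounded ?_ fun p =>
      norm_mul_newtonChangeCoeff_mul_newtonBasis_le hρ hd he ha hrs p.1 p.2
    exact ((summable_geometric_of_lt_one (by positivity) ((div_lt_one hρ).mpr hsρ)).mul_left
      _).mul_of_nonneg (summable_geometric_of_lt_one (by positivity) ((div_lt_one hs).mpr hrs))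
      (fun j => mul_nonneg hM (by positivity)) fun n => by positivity
  have hrow : ∀ j, HasSum (fun n => F (j, n)) (a j * newtonBasis e x j) := by
    intro j
    have hfin : HasSum (fun n => F (j, n)) (∑ n ∈ range (j + 1), F (j, n)) :=
      hasSum_sum_of_ne_finset_zero fun n hn => by
        simp [F, newtonChangeCoeff_eq_zero_of_lt e d (by simpa using hn : j < n)]
    rw [newtonBasis_eq_sum_newtonChangeCoeff e d x j, mul_sum]
    simpa only [F, mul_assoc] using hfin
  have hcol : ∀ n, HasSum (fun j => F (j, n))
      ((∑' j, a j * newtonChangeCoeff e d j n) * newtonBasis d x n) := fun n => by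
    rw [← tsum_mul_right]
    exact ((Equiv.prodComm ℕ ℕ).summable_iff.mpr hFs).prod_factor n |>.hasSum
  rw [(hFs.hasSum.prod_fiberwise hrow).tsum_eq]
  exact ((Equiv.prodComm ℕ ℕ).hasSum_iff.mpr hFs.hasSum).prod_fiberwise hcol

end Reexpansion

theorem norm_mul_pow_le_of_tsum_newtonBasis_eq {K : Type*} [NontriviallyNormedField K]
    [IsUltrametricDist K] [CompleteSpace K] {e d : ℕ → K} {c : K} {δ ρ M : ℝ} {a b : ℕ → K}
    (hδρ : δ < ρ) (hd : ∀ k, ‖d k - c‖ ≤ δ) (he : ∀ k, ‖e k - c‖ ≤ δ)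
    (hdich : Injective d ∨ (Set.range d).Finite) (ha : ∀ j, ‖a j‖ * ρ ^ j ≤ M)
    (hb : ∀ x, ‖x - c‖ < ρ → Summable fun n => b n * newtonBasis d x n)
    (heq : ∀ x, ‖x - c‖ < ρ →
      ∑' j, a j * newtonBasis e x j = ∑' n, b n * newtonBasis d x n)
    (n : ℕ) : ‖b n‖ * ρ ^ n ≤ M := by
  set B : ℕ → K := fun n => ∑' j, a j * newtonChangeCoeff e d j n
  have hBsum := fun x (hx : ‖x - c‖ < ρ) =>
    hasSum_tsum_mul_newtonChangeCoeff_mul_newtonBasis hδρ hd he ha hx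
  have hbB : ∀ n, b n - B n = 0 := eq_zero_of_tsum_newtonBasis_eq_zero hδρ hd hdich fun x hx => by
    simp_rw [sub_mul]
    refine ⟨(hb x hx).sub (hBsum x hx).summable, ?_⟩
    rw [(hb x hx).tsum_sub (hBsum x hx).summable, (hBsum x hx).tsum_eq, heq x hx, sub_self]
  simpa [sub_eq_zero.mp (hbB n)] using norm_tsum_mul_newtonChangeCoeff_mul_pow_le hδρ hd he ha n

lemma Real.iSup_eq_iSup_of_forall_le_iff {ι ι' : Type*} [Nonempty ι] [Nonempty ι']
    {f : ι → ℝ} {g : ι' → ℝ} (h : ∀ M, (∀ i, f i ≤ M) ↔ ∀ j, g j ≤ M) :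
    ⨆ i, f i = ⨆ j, g j := by
  have hub : upperBounds (Set.range f) = upperBounds (Set.range g) := by
    ext M
    simp only [mem_upperBounds, Set.forall_mem_range, h M]
  by_cases hf : BddAbove (Set.range f)
  · have hg : BddAbove (Set.range g) := by rwa [BddAbove, ← hub]
    have hlub : IsLUB (Set.range f) (⨆ j, g j) := by
      rw [IsLUB, hub]
      exact isLUB_ciSup hg
    exact (isLUB_ciSup hf).unique hlub
  · have hg : ¬BddAbove (Set.range g) := by rwa [BddAbove, ← hub]
    rw [Real.iSup_of_not_bddAbove hf, Real.iSup_of_not_bddAbove hg]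

lemma Function.injective_iterate_or_finite_range {α : Type*} (f : α → α) (x : α) :
    Injective (fun n => f^[n] x) ∨ (Set.range fun n => f^[n] x).Finite := by
  refine or_iff_not_imp_left.mpr fun hinj => ?_
  obtain ⟨i, j, hij, hne⟩ := Function.not_injective_iff.mp hinj
  wlog hlt : i < j generalizing i j
  · exact this j i hij.symm hne.symm (by omega)
  refine ((Set.finite_Iio j).image fun n => f^[n] x).subset ?_
  rintro _ ⟨k, rfl⟩
  induction k using Nat.strong_induction_on with
  | _ k ih =>
    by_cases hk : k < j
    · exact ⟨k, hk, rfl⟩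
    · have hper : f^[k] x = f^[k - j + i] x := by
        rw [iterate_add_apply, hij, ← iterate_add_apply, Nat.sub_add_cancel (not_lt.mp hk)]
      simpa only [hper] using ih _ (by omega)

lemma LipschitzWith.dist_iterate_le {X : Type*} [PseudoMetricSpace X] [IsUltrametricDist X]
    {f : X → X} (hf : LipschitzWith 1 f) (x : X) (k : ℕ) : dist (f^[k] x) x ≤ dist (f x) x := by
  induction k with
  | zero => simp
  | succ k ih =>
    calc dist (f^[k + 1] x) x ≤ max (dist (f (f^[k] x)) (f x)) (dist (f x) x) := by
          rw [iterate_succ_apply']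
          exact IsUltrametricDist.dist_triangle_max _ _ _
      _ ≤ dist (f x) x := by
          refine max_le ((hf.dist_le_mul (f^[k] x) x).trans ?_) le_rfl
          simpa using ih

theorem stmt13_general {K : Type*} [NontriviallyNormedField K] [IsUltrametricDist K]
    [CompleteSpace K]
    (q h c : K) (hq : ‖q - 1‖ < 1) (ρ R : ℝ) (hρR : ρ < R)
    (hstab : ‖(q - 1) * c + h‖ < ρ)
    (a b : ℕ → K)
    (hconv : ∀ t : K, ‖t - c‖ < R → Summable (fun n : ℕ => a n * (t - c) ^ n))
    (hconv' : ∀ t : K, ‖t - c‖ < R →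
      Summable (fun n : ℕ => b n * ∏ k ∈ Finset.range n, (t - (fun x : K => q * x + h)^[k] c)))
    (heq : ∀ t : K, ‖t - c‖ < R →
      (∑' n : ℕ, a n * (t - c) ^ n)
        = ∑' n : ℕ, b n * ∏ k ∈ Finset.range n, (t - (fun x : K => q * x + h)^[k] c)) :
    (⨆ n : ℕ, ‖a n‖ * ρ ^ n) = ⨆ n : ℕ, ‖b n‖ * ρ ^ n := by
  set σ : K → K := fun x => q * x + h
  have hq1 : ‖q‖ ≤ 1 := by
    simpa using (IsUltrametricDist.norm_add_le_max (q - 1) 1).trans (max_le hq.le norm_one.le)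
  have hσ : LipschitzWith 1 σ := LipschitzWith.of_dist_le_mul fun x y => by
    simpa [σ, dist_eq_norm, ← mul_sub, norm_mul] using
      mul_le_mul_of_nonneg_right hq1 (norm_nonneg (x - y))
  have horbit : ∀ k, ‖σ^[k] c - c‖ ≤ ‖(q - 1) * c + h‖ := fun k => by
    simpa [σ, dist_eq_norm, show q * c + h - c = (q - 1) * c + h by ring] using
      hσ.dist_iterate_le c k
  have hconst : ∀ k, ‖(fun _ : ℕ => c) k - c‖ ≤ ‖(q - 1) * c + h‖ := fun _ => by simp
  simp only [← newtonBasis_const] at hconv heq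
  refine Real.iSup_eq_iSup_of_forall_le_iff fun M => ⟨fun ha => ?_, fun hb => ?_⟩
  · exact norm_mul_pow_le_of_tsum_newtonBasis_eq hstab horbit hconst
      (injective_iterate_or_finite_range σ c) ha (fun t ht => hconv' t (ht.trans hρR))
      fun t ht => heq t (ht.trans hρR)
  · exact norm_mul_pow_le_of_tsum_newtonBasis_eq hstab hconst horbit
      (Or.inr (by simp)) hb (fun t ht => hconv t (ht.trans hρR))
      fun t ht => (heq t (ht.trans hρR)).symm

/-- Gauss norms agree in the standard and twisted bases: with `σ(x) = qx + h`,
`|q - 1| < 1`, `|(q-1)c + h| < ρ < R`, if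
`f(T) = ∑ a_n (T-c)^n = ∑ b_n (T-c)_{q,h}^{[n]}` on the open disc `|T - c| < R`,
where `(T-c)_{q,h}^{[n]} = ∏_{k<n} (T - σ^k(c))`, then
`sup_n |a_n| ρ^n = sup_n |b_n| ρ^n`. -/
theorem stmt13 {K : Type*} [NontriviallyNormedField K] [IsUltrametricDist K]
    [CompleteSpace K] [CharZero K]
    (q h c : K) (hq : ‖q - 1‖ < 1) (ρ R : ℝ) (hρ0 : 0 < ρ) (hρR : ρ < R)
    (hstab : ‖(q - 1) * c + h‖ < ρ)
    (a b : ℕ → K)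
    (hconv : ∀ t : K, ‖t - c‖ < R → Summable (fun n : ℕ => a n * (t - c) ^ n))
    (hconv' : ∀ t : K, ‖t - c‖ < R →
      Summable (fun n : ℕ => b n * ∏ k ∈ Finset.range n, (t - (fun x : K => q * x + h)^[k] c)))
    (heq : ∀ t : K, ‖t - c‖ < R →
      (∑' n : ℕ, a n * (t - c) ^ n)
        = ∑' n : ℕ, b n * ∏ k ∈ Finset.range n, (t - (fun x : K => q * x + h)^[k] c)) :
    (⨆ n : ℕ, ‖a n‖ * ρ ^ n) = ⨆ n : ℕ, ‖b n‖ * ρ ^ n :=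
  stmt13_general q h c hq ρ R hρR hstab a b hconv hconv' heq
end

section
/- Let p ≠ 2 be prime and k ≥ 1. Then p^{-k} · ∑_{1 ≤ i ≤ p^k - 1, gcd(i,p)=1} i^{-1} ∈ ℤ_p and the sequence (p^{-k} · ∑_{1 ≤ i ≤ p^k - 1, gcd(i,p)=1} i^{-1})_k converges to 0 in ℚ_p as k → ∞. -/
/-!
Pairing `i` with `p ^ k - i` gives `2 S = p ^ k P` with `P = ∑ 1 / (i (p ^ k - i))`, so
`p ^ (-k) S = P / 2` and it suffices to show `‖P‖ ≤ p ^ (1 - k)`. Modulo `p ^ k`, `P` reduces to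
`-∑ u ^ 2` over the units `u` of `ℤ / p ^ k`; this sum is killed by `2 ^ 2 - 1 = 3` because
`u ↦ 2 u` permutes the units, and since `p ^ 2 ∤ 3` this forces `P ≡ 0 mod p ^ (k - 1)`.
-/

open Finset Filter

theorem Units.pow_sub_one_mul_sum_pow {R : Type*} [CommRing R] [Fintype Rˣ] (c : Rˣ) (m : ℕ) :
    ((c : R) ^ m - 1) * ∑ u : Rˣ, (u : R) ^ m = 0 := by
  have h : ∑ u : Rˣ, ((c * u : Rˣ) : R) ^ m = ∑ u : Rˣ, (u : R) ^ m :=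
    Fintype.sum_equiv (Equiv.mulLeft c) _ _ fun _ => rfl
  simp only [Units.val_mul, mul_pow, ← Finset.mul_sum] at h
  rw [sub_mul, h, one_mul, sub_self]

theorem ZMod.sum_units_val {M : Type*} [AddCommMonoid M] (n : ℕ) [NeZero n] (f : ℕ → M) :
    ∑ u : (ZMod n)ˣ, f (u : ZMod n).val = ∑ i ∈ (range n).filter (Nat.Coprime · n), f i := by
  refine Finset.sum_bij (fun u _ => (u : ZMod n).val) (fun u _ => ?_) (fun u _ v _ h => ?_)
    (fun i hi => ?_) fun _ _ => rfl
  · exact mem_filter.2 ⟨mem_range.2 (ZMod.val_lt _), ZMod.val_coe_unit_coprime u⟩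
  · exact Units.ext (ZMod.val_injective n h)
  · obtain ⟨hin, hi⟩ := mem_filter.1 hi
    exact ⟨ZMod.unitOfCoprime i hi, mem_univ _, by
      simp [ZMod.val_cast_of_lt (mem_range.1 hin)]⟩

namespace PadicInt
variable {p : ℕ} [Fact p.Prime] {k : ℕ}

theorem inv_le_norm_natCast {n : ℕ} (hn0 : n ≠ 0) (hn : n < p ^ 2) :
    (p : ℝ)⁻¹ ≤ ‖(n : ℤ_[p])‖ := by
  by_contra! h
  rw [← zpow_neg_one, show (-1 : ℤ) = -2 + 1 by norm_num,
    ← norm_le_pow_iff_norm_lt_pow_add_one] at h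
  have hdvd : (p ^ 2 : ℤ) ∣ n := norm_int_le_pow_iff_dvd.1 (by exact_mod_cast h)
  have := Nat.le_of_dvd (Nat.pos_of_ne_zero hn0) (by exact_mod_cast hdvd)
  omega

theorem isUnit_natCast_val (hk : k ≠ 0) (u : (ZMod (p ^ k))ˣ) :
    IsUnit ((u : ZMod (p ^ k)).val : ℤ_[p]) := by
  rw [isUnit_iff, norm_natCast_eq_one_iff, Nat.coprime_comm]
  exact (Nat.coprime_pow_right_iff (Nat.pos_of_ne_zero hk) _ _).1 (ZMod.val_coe_unit_coprime u)

noncomputable def unitLift (hk : k ≠ 0) (u : (ZMod (p ^ k))ˣ) : ℤ_[p]ˣ :=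
  (isUnit_natCast_val hk u).unit

variable (hk : k ≠ 0)

theorem coe_unitLift (u : (ZMod (p ^ k))ˣ) : (unitLift hk u : ℤ_[p]) = (u : ZMod (p ^ k)).val :=
  rfl

theorem map_toZModPow_unitLift (u : (ZMod (p ^ k))ˣ) :
    Units.map (toZModPow k : ℤ_[p] →+* ZMod (p ^ k)).toMonoidHom (unitLift hk u) = u := by
  ext
  simp [coe_unitLift]

theorem unitLift_neg_add (u : (ZMod (p ^ k))ˣ) :
    (unitLift hk (-u) : ℤ_[p]) + unitLift hk u = (p : ℤ_[p]) ^ k := by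
  have : Fact (1 < p ^ k) := ⟨Nat.one_lt_pow hk (Fact.out : p.Prime).one_lt⟩
  have : NeZero (u : ZMod (p ^ k)) := ⟨u.ne_zero⟩
  rw [coe_unitLift, coe_unitLift, Units.val_neg, ZMod.val_neg_of_ne_zero,
    Nat.cast_sub (ZMod.val_lt _).le]
  push_cast
  ring

variable (p) in
noncomputable def invPairSum : ℤ_[p] :=
  ∑ u, (((unitLift hk u * unitLift hk (-u))⁻¹ : ℤ_[p]ˣ) : ℤ_[p])

theorem two_mul_sum_inv_unitLift :
    2 * ∑ u, (((unitLift hk u)⁻¹ : ℤ_[p]ˣ) : ℤ_[p]) =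
      (p : ℤ_[p]) ^ k * invPairSum p hk := by
  have hneg : ∑ u, (((unitLift hk (-u))⁻¹ : ℤ_[p]ˣ) : ℤ_[p]) =
      ∑ u, (((unitLift hk u)⁻¹ : ℤ_[p]ˣ) : ℤ_[p]) :=
    Fintype.sum_equiv (Equiv.neg _) _ _ fun _ => rfl
  rw [two_mul]
  nth_rewrite 2 [← hneg]
  rw [← sum_add_distrib, invPairSum, mul_sum]
  refine sum_congr rfl fun u _ => ?_
  rw [← unitLift_neg_add hk u, _root_.mul_inv, Units.val_mul]
  linear_combination -(((unitLift hk u)⁻¹ : ℤ_[p]ˣ) : ℤ_[p]) * (unitLift hk (-u)).mul_inv -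
    (((unitLift hk (-u))⁻¹ : ℤ_[p]ˣ) : ℤ_[p]) * (unitLift hk u).mul_inv

theorem toZModPow_invPairSum :
    toZModPow k (invPairSum p hk) =
      -∑ u : (ZMod (p ^ k))ˣ, (u : ZMod (p ^ k)) ^ 2 := by
  have hinv (u : (ZMod (p ^ k))ˣ) :
      toZModPow k (((unitLift hk u * unitLift hk (-u))⁻¹ : ℤ_[p]ˣ) : ℤ_[p]) = -↑u⁻¹ ^ 2 := by
    refine (Units.coe_map_inv (toZModPow k : ℤ_[p] →+* ZMod (p ^ k)).toMonoidHom _).symm.trans ?_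
    rw [map_mul, map_toZModPow_unitLift, map_toZModPow_unitLift, mul_neg, ← neg_inv,
      Units.val_neg, ← sq, ← inv_pow, Units.val_pow_eq_pow_val]
  simp only [invPairSum, map_sum, hinv, sum_neg_distrib]
  exact congrArg _ (Fintype.sum_equiv (Equiv.inv _) _ _ fun _ => rfl)

theorem norm_invPairSum_le (hp : p ≠ 2) : ‖invPairSum p hk‖ ≤ (p : ℝ) ^ (1 - k : ℤ) := by
  set P := invPairSum p hk
  have h2 : IsUnit (2 : ZMod (p ^ k)) := by
    have := (ZMod.isUnit_iff_coprime 2 (p ^ k)).2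
      (((Nat.coprime_primes Nat.prime_two Fact.out).2 hp.symm).pow_right k)
    exact_mod_cast this
  have h3P : toZModPow k (3 * P) = 0 := by
    rw [map_mul, toZModPow_invPairSum, map_ofNat]
    have h := Units.pow_sub_one_mul_sum_pow h2.unit 2
    rw [h2.unit_spec] at h
    linear_combination -h
  have h3P' : ‖(3 : ℤ_[p])‖ * ‖P‖ ≤ (p : ℝ) ^ (-k : ℤ) := by
    rw [← norm_mul, norm_le_pow_iff_mem_span_pow, ← ker_toZModPow]
    exact h3P
  have h3 : (p : ℝ)⁻¹ ≤ ‖(3 : ℤ_[p])‖ := by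
    have hp2 : 2 ≤ p := (Fact.out : p.Prime).two_le
    exact_mod_cast inv_le_norm_natCast (n := 3) (by norm_num) (by nlinarith)
  have hp0 : (0 : ℝ) < p := by exact_mod_cast (Fact.out : p.Prime).pos
  calc ‖P‖ = p * ((p : ℝ)⁻¹ * ‖P‖) := by field_simp
    _ ≤ p * (‖(3 : ℤ_[p])‖ * ‖P‖) := by gcongr
    _ ≤ p * (p : ℝ) ^ (-k : ℤ) := by gcongr
    _ = (p : ℝ) ^ (1 - k : ℤ) := by rw [sub_eq_add_neg, zpow_add₀ hp0.ne', zpow_one]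

theorem coe_sum_inv_unitLift :
    ((∑ u, (((unitLift hk u)⁻¹ : ℤ_[p]ˣ) : ℤ_[p]) : ℤ_[p]) : ℚ_[p]) =
      ∑ i ∈ (range (p ^ k)).filter (fun i => Nat.Coprime i p), (i : ℚ_[p])⁻¹ := by
  have : NeZero (p ^ k) := ⟨pow_ne_zero _ (Fact.out : p.Prime).ne_zero⟩
  have hcop : (range (p ^ k)).filter (fun i => Nat.Coprime i p) =
      (range (p ^ k)).filter (Nat.Coprime · (p ^ k)) :=
    filter_congr fun i _ => (Nat.coprime_pow_right_iff (Nat.pos_of_ne_zero hk) _ _).symm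
  have hinv (u : (ZMod (p ^ k))ˣ) : (((u : ZMod (p ^ k)).val : ℚ_[p]))⁻¹ =
      (((unitLift hk u)⁻¹ : ℤ_[p]ˣ) : ℤ_[p]) :=
    inv_eq_of_mul_eq_one_right <| by
      rw [← coe_natCast, ← coe_unitLift hk, ← coe_mul, Units.mul_inv, coe_one]
  rw [hcop, ← ZMod.sum_units_val, coe_sum]
  simp only [hinv]

theorem zpow_neg_mul_sum_inv_coprime :
    (p : ℚ_[p]) ^ (-(k : ℤ)) *
        ∑ i ∈ (range (p ^ k)).filter (fun i => Nat.Coprime i p), (i : ℚ_[p])⁻¹ =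
      2⁻¹ * (invPairSum p hk : ℚ_[p]) := by
  have hpair := congrArg ((↑) : ℤ_[p] → ℚ_[p]) (two_mul_sum_inv_unitLift hk)
  have hcoe2 : ((2 : ℤ_[p]) : ℚ_[p]) = 2 := by exact_mod_cast coe_natCast 2
  push_cast [hcoe2] at hpair
  have hp0 : (p : ℚ_[p]) ≠ 0 := by exact_mod_cast (Fact.out : p.Prime).ne_zero
  rw [← coe_sum_inv_unitLift hk, zpow_neg, zpow_natCast]
  field_simp
  linear_combination hpair

end PadicInt

theorem norm_zpow_neg_mul_sum_inv_coprime_le {p : ℕ} [Fact p.Prime] (hp : p ≠ 2) {k : ℕ}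
    (hk : k ≠ 0) :
    ‖(p : ℚ_[p]) ^ (-(k : ℤ)) *
        ∑ i ∈ (range (p ^ k)).filter (fun i => Nat.Coprime i p), (i : ℚ_[p])⁻¹‖ ≤
      (p : ℝ) ^ (1 - k : ℤ) := by
  have h2 : ‖(2 : ℚ_[p])‖ = 1 := by
    exact_mod_cast Padic.norm_natCast_eq_one_iff.2
      ((Nat.coprime_primes Fact.out Nat.prime_two).2 hp)
  rw [PadicInt.zpow_neg_mul_sum_inv_coprime hk, norm_mul, norm_inv, h2, inv_one, one_mul,
    PadicInt.padic_norm_e_of_padicInt]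
  exact PadicInt.norm_invPairSum_le hk hp

/-- For an odd prime `p` and `k ≥ 1`, the normalized sums
`p^{-k} · S_1(p^k) = p^{-k} · ∑_{1 ≤ i ≤ p^k - 1, gcd(i,p)=1} i⁻¹` (taken in `ℚ_p`)
are `p`-adic integers, and they tend to `0` in `ℚ_p` as `k → ∞`. -/
theorem stmt19 (p : ℕ) [Fact p.Prime] (hp : p ≠ 2) :
    (∀ k : ℕ, 1 ≤ k →
      ‖(p : ℚ_[p]) ^ (-(k : ℤ)) *
          ∑ i ∈ (Finset.range (p ^ k)).filter (fun i => Nat.Coprime i p),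
            ((i : ℚ_[p]))⁻¹‖ ≤ 1)
    ∧ Filter.Tendsto
        (fun k : ℕ => (p : ℚ_[p]) ^ (-(k : ℤ)) *
          ∑ i ∈ (Finset.range (p ^ k)).filter (fun i => Nat.Coprime i p),
            ((i : ℚ_[p]))⁻¹)
        Filter.atTop (nhds 0) := by
  have hp1 : (1 : ℝ) < p := by exact_mod_cast (Fact.out : p.Prime).one_lt
  refine ⟨fun k hk => (norm_zpow_neg_mul_sum_inv_coprime_le hp (by omega)).trans
    (zpow_le_one_of_nonpos₀ hp1.le (by omega)), ?_⟩
  refine squeeze_zero_norm' ((eventually_ne_atTop 0).mono fun k hk =>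
    norm_zpow_neg_mul_sum_inv_coprime_le hp hk) ?_
  have hbound (k : ℕ) : (p : ℝ) ^ (1 - k : ℤ) = p * (p : ℝ)⁻¹ ^ k := by
    rw [sub_eq_add_neg, zpow_add₀ (by positivity), zpow_one, zpow_neg, zpow_natCast, inv_pow]
  simp only [hbound]
  simpa using (tendsto_pow_atTop_nhds_zero_of_lt_one (by positivity)
    (inv_lt_one_of_one_lt₀ hp1)).const_mul (p : ℝ)
end
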